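/- Let (s_n) be a bounded sequence of nonnegative real numbers and D ∈ ℕ, D ≥ 1, an upper bound on (s_n). Let (a_n) ⊂ [0,1] and (r_n) ⊂ ℝ be sequences, and let A : ℕ → ℕ be a rate of divergence for ∑ a_n. Let ε > 0, K, P ∈ ℕ and ℰ ≥ 0 be given. If for all n ∈ [K, P]: (i) s_{n+1} ≤ (1 − a_n)·s_n + a_n·r_n + ℰ, (ii) r_n ≤ ε/3, and (iii) ℰ ≤ ε/(3(P+1)), then s_n ≤ ε for all n ∈ [σ, P], where σ := A(K + ⌈ln(3D/ε)⌉) + 1. -/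

import Mathlib

/-!
Unfolding the recursion from `K` gives
`sₙ - ε/3 ≤ (∏_{K ≤ i < n} (1 - aᵢ)) (s_K - ε/3) + (n - K) ℰ`.
The error term contributes at most `(P + 1) ℰ ≤ ε/3`, and since `1 - x ≤ e^{-x}` the product is
at most `exp (-∑_{K ≤ i < n} aᵢ)`. For `n > A(K + N)` the rate of divergence forces this sum to
be at least `N = ⌈ln(3D/ε)⌉`, because the first `K` terms contribute at most `K`; so the product
term is at most `D · ε/(3D) = ε/3`.
-/

open Finset Real

theorem prod_one_sub_le_exp_neg_sum {ι : Type*} (t : Finset ι) {a : ι → ℝ}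
    (ha : ∀ i ∈ t, a i ≤ 1) : ∏ i ∈ t, (1 - a i) ≤ exp (-∑ i ∈ t, a i) := by
  rw [← sum_neg_distrib, exp_sum]
  exact prod_le_prod (fun i hi => sub_nonneg.2 (ha i hi)) fun i _ => one_sub_le_exp_neg _

theorem exp_neg_natCeil_log_mul_le_one {x : ℝ} (hx : 0 ≤ x) : exp (-⌈log x⌉₊) * x ≤ 1 := by
  rcases hx.eq_or_lt with rfl | hx
  · simp
  calc exp (-⌈log x⌉₊) * x ≤ exp (-log x) * x := by gcongr; exact Nat.le_ceil _
    _ = 1 := by rw [exp_neg, exp_log hx, inv_mul_cancel₀ hx.ne']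

section Recursion

variable {s a r : ℕ → ℝ} {K : ℕ} {R E : ℝ}

theorem sub_le_prod_one_sub_mul_sub_add_of_rec {m : ℕ} (hKm : K ≤ m)
    (ha : ∀ n, a n ∈ Set.Icc (0 : ℝ) 1) (hE : 0 ≤ E)
    (hrec : ∀ n ∈ Ico K m, s (n + 1) ≤ (1 - a n) * s n + a n * r n + E)
    (hr : ∀ n ∈ Ico K m, r n ≤ R) :
    s m - R ≤ (∏ i ∈ Ico K m, (1 - a i)) * (s K - R) + (m - K : ℕ) * E := by
  induction m, hKm using Nat.le_induction with
  | base => simp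
  | succ m hKm ih =>
    have hsub : Ico K m ⊆ Ico K (m + 1) := Ico_subset_Ico_right m.le_succ
    have ih := ih (fun n hn => hrec n (hsub hn)) fun n hn => hr n (hsub hn)
    have hm : m ∈ Ico K (m + 1) := mem_Ico.2 ⟨hKm, m.lt_succ_self⟩
    obtain ⟨ha0, ha1⟩ := ha m
    have hrm : a m * (r m - R) ≤ 0 := mul_nonpos_of_nonneg_of_nonpos ha0 (by linarith [hr m hm])
    have hdecay : (1 - a m) * ((m - K : ℕ) * E) ≤ (m - K : ℕ) * E :=
      mul_le_of_le_one_left (by positivity) (by linarith)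
    rw [prod_Ico_succ_top hKm, Nat.succ_sub hKm]
    push_cast
    calc s (m + 1) - R ≤ (1 - a m) * (s m - R) + E := by linarith [hrec m hm]
      _ ≤ (1 - a m) * ((∏ i ∈ Ico K m, (1 - a i)) * (s K - R) + (m - K : ℕ) * E) + E := by
        gcongr
      _ ≤ (∏ i ∈ Ico K m, (1 - a i)) * (1 - a m) * (s K - R) + ((m - K : ℕ) + 1) * E := by
        linarith

end Recursion

section RateOfDivergence

variable {a : ℕ → ℝ} {A : ℕ → ℕ}

theorem le_succ_of_rate (ha : ∀ n, a n ≤ 1)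
    (hA : ∀ k : ℕ, (k : ℝ) ≤ ∑ i ∈ range (A k + 1), a i) (k : ℕ) : k ≤ A k + 1 := by
  have hsum : ∑ i ∈ range (A k + 1), a i ≤ (A k + 1 : ℕ) := by
    simpa using sum_le_card_nsmul (range (A k + 1)) _ 1 fun i _ => ha i
  exact_mod_cast (hA k).trans hsum

theorem le_sum_Ico_of_rate (ha : ∀ n, a n ∈ Set.Icc (0 : ℝ) 1)
    (hA : ∀ k : ℕ, (k : ℝ) ≤ ∑ i ∈ range (A k + 1), a i) {K N n : ℕ} (hn : A (K + N) + 1 ≤ n) :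
    (N : ℝ) ≤ ∑ i ∈ Ico K n, a i := by
  have hK : K ≤ A (K + N) + 1 := (K.le_add_right N).trans (le_succ_of_rate (fun i => (ha i).2) hA _)
  have hinit : ∑ i ∈ range K, a i ≤ K := by
    simpa using sum_le_card_nsmul (range K) _ 1 fun i _ => (ha i).2
  have htail : ∑ i ∈ Ico K (A (K + N) + 1), a i ≤ ∑ i ∈ Ico K n, a i :=
    sum_le_sum_of_subset_of_nonneg (Ico_subset_Ico_right hn) fun i _ _ => (ha i).1
  have hrate := hA (K + N)
  rw [← sum_range_add_sum_Ico a hK] at hrate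
  push_cast at hrate
  linarith

end RateOfDivergence

theorem stmt3_general (s a r : ℕ → ℝ) (D : ℕ)
    (hsD : ∀ n, s n ≤ (D : ℝ))
    (ha : ∀ n, a n ∈ Set.Icc (0 : ℝ) 1)
    (A : ℕ → ℕ)
    (hA : ∀ k : ℕ, (k : ℝ) ≤ ∑ i ∈ Finset.range (A k + 1), a i)
    (ε : ℝ) (hε : 0 < ε) (K P : ℕ) (E : ℝ) (hE : 0 ≤ E)
    (h1 : ∀ n, K ≤ n → n ≤ P → s (n + 1) ≤ (1 - a n) * s n + a n * r n + E)
    (h2 : ∀ n, K ≤ n → n ≤ P → r n ≤ ε / 3)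
    (h3 : E ≤ ε / (3 * (P + 1))) :
    ∀ n, A (K + ⌈Real.log (3 * D / ε)⌉₊) + 1 ≤ n → n ≤ P → s n ≤ ε := by
  intro n hn hnP
  set N := ⌈log (3 * D / ε)⌉₊
  have hKn : K ≤ n := ((K.le_add_right N).trans (le_succ_of_rate (fun i => (ha i).2) hA _)).trans hn
  have hunfold := sub_le_prod_one_sub_mul_sub_add_of_rec hKn ha hE
    (fun m hm => h1 m (mem_Ico.1 hm).1 (by grind)) fun m hm => h2 m (mem_Ico.1 hm).1 (by grind)
  have hprod_nonneg : 0 ≤ ∏ i ∈ Ico K n, (1 - a i) := prod_nonneg fun i _ => by linarith [(ha i).2]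
  have hprod : (∏ i ∈ Ico K n, (1 - a i)) * (s K - ε / 3) ≤ ε / 3 := calc
    _ ≤ (∏ i ∈ Ico K n, (1 - a i)) * D := by gcongr; linarith [hsD K]
    _ ≤ exp (-∑ i ∈ Ico K n, a i) * D := by
      gcongr; exact prod_one_sub_le_exp_neg_sum _ fun i _ => (ha i).2
    _ ≤ exp (-N) * D := by gcongr; exact le_sum_Ico_of_rate ha hA hn
    _ = ε / 3 * (exp (-N) * (3 * D / ε)) := by field_simp
    _ ≤ ε / 3 := mul_le_of_le_one_right (by positivity)
      (exp_neg_natCeil_log_mul_le_one (by positivity))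
  have herr : ((n - K : ℕ) : ℝ) * E ≤ ε / 3 := calc
    _ ≤ (P + 1) * E := by gcongr; exact_mod_cast (by omega : n - K ≤ P + 1)
    _ ≤ ε / 3 := by rw [le_div_iff₀ (by positivity)] at h3; linarith
  linarith

/-- Finitary Xu lemma with error term `E`: if on the interval `[K, P]` the
recursive inequality holds with error `E ≤ ε/(3(P+1))` and `rₙ ≤ ε/3`, then
`sₙ ≤ ε` for all `n ∈ [σ, P]` with `σ = A(K + ⌈ln(3D/ε)⌉) + 1`. -/
theorem stmt3 (s a r : ℕ → ℝ) (D : ℕ) (hD : 1 ≤ D)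
    (hs0 : ∀ n, 0 ≤ s n) (hsD : ∀ n, s n ≤ (D : ℝ))
    (ha : ∀ n, a n ∈ Set.Icc (0 : ℝ) 1)
    (A : ℕ → ℕ)
    (hA : ∀ k : ℕ, (k : ℝ) ≤ ∑ i ∈ Finset.range (A k + 1), a i)
    (ε : ℝ) (hε : 0 < ε) (K P : ℕ) (E : ℝ) (hE : 0 ≤ E)
    (h1 : ∀ n, K ≤ n → n ≤ P → s (n + 1) ≤ (1 - a n) * s n + a n * r n + E)
    (h2 : ∀ n, K ≤ n → n ≤ P → r n ≤ ε / 3)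
    (h3 : E ≤ ε / (3 * (P + 1))) :
    ∀ n, A (K + ⌈Real.log (3 * D / ε)⌉₊) + 1 ≤ n → n ≤ P → s n ≤ ε :=
  stmt3_general s a r D hsD ha A hA ε hε K P E hE h1 h2 h3
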